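/- arXiv:1702.06514 — 8 statements merged into one kernel-verified Lean document; each statement's English description precedes it below -/
import Mathlib

section
/- Let I = diag(1_n, −1_n) and let f ∈ SU(2n) satisfy f†·I·f = I (i.e. f ∈ S(U(n)×U(n))). Let b ∈ B (upper triangular with positive real diagonal) and let f̃ ∈ SU(2n) be the unique unitary with f̃·b·f† ∈ B. Then f̃ also satisfies f̃†·I·f̃ = I. -/
open Matrix

/-- The dressing action restricts to `K₊ = S(U(n)×U(n))`: if `f ∈ K₊` and
`f̃ ∈ SU(2n)` satisfies `f̃ b fᴴ ∈ B`, then `f̃ ∈ K₊`. -/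
theorem dressing_restricts_to_Kplus (n : ℕ) (hn : 1 ≤ n)
    (I : Matrix (Fin (2 * n)) (Fin (2 * n)) ℂ)
    (hI : I = Matrix.diagonal (fun i : Fin (2 * n) => if (i : ℕ) < n then (1 : ℂ) else -1))
    (b f ft : Matrix (Fin (2 * n)) (Fin (2 * n)) ℂ)
    (hb_tri : ∀ i j : Fin (2 * n), j < i → b i j = 0)
    (hb_diag : ∀ i : Fin (2 * n), (b i i).im = 0 ∧ 0 < (b i i).re)
    (hb_det : b.det = 1)
    (hf : f ∈ Matrix.unitaryGroup (Fin (2 * n)) ℂ) (hf_det : f.det = 1)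
    (hfI : fᴴ * I * f = I)
    (hft : ft ∈ Matrix.unitaryGroup (Fin (2 * n)) ℂ) (hft_det : ft.det = 1)
    (hdress_tri : ∀ i j : Fin (2 * n), j < i → (ft * b * fᴴ) i j = 0)
    (hdress_diag : ∀ i : Fin (2 * n),
      ((ft * b * fᴴ) i i).im = 0 ∧ 0 < ((ft * b * fᴴ) i i).re) :
    ftᴴ * I * ft = I := by
  -- unitarity equations
  have hffH : f * fᴴ = 1 := by
    simpa [Matrix.star_eq_conjTranspose] using Matrix.mem_unitaryGroup_iff.mp hf
  have hftftH : ft * ftᴴ = 1 := by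
    simpa [Matrix.star_eq_conjTranspose] using Matrix.mem_unitaryGroup_iff.mp hft
  have hftHft : ftᴴ * ft = 1 := by
    simpa [Matrix.star_eq_conjTranspose] using Matrix.mem_unitaryGroup_iff'.mp hft
  -- f commutes with I
  have hcomm : I * f = f * I := by
    have h1 : f * (fᴴ * I * f) = f * I := by rw [hfI]
    calc I * f = f * fᴴ * I * f := by rw [hffH, one_mul]
    _ = f * (fᴴ * I * f) := by rw [mul_assoc, mul_assoc, mul_assoc]
    _ = f * I := h1
  -- f is block diagonal
  have hf0 : ∀ i j : Fin (2 * n), ¬ ((i : ℕ) < n ↔ (j : ℕ) < n) → f i j = 0 := by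
    intro i j hij
    have h := Matrix.ext_iff.mpr hcomm i j
    rw [hI] at h
    rw [Matrix.diagonal_mul, Matrix.mul_diagonal] at h
    rcases Classical.em ((i : ℕ) < n) with hi | hi
    · have hj : ¬ (j : ℕ) < n := by tauto
      rw [if_pos hi, if_neg hj, one_mul] at h
      have : (2 : ℂ) * f i j = 0 := by linear_combination h
      simpa using this
    · have hj : (j : ℕ) < n := by tauto
      rw [if_neg hi, if_pos hj, mul_one] at h
      have : (2 : ℂ) * f i j = 0 := by linear_combination - h
      simpa using this
  -- the dressed triangular matrix
  set b' := ft * b * fᴴ with hb'def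
  have hb'det : b'.det = 1 := by
    have hdetfH : fᴴ.det = 1 := by rw [Matrix.det_conjTranspose, hf_det]; simp
    rw [hb'def, Matrix.det_mul, Matrix.det_mul, hft_det, hb_det, hdetfH]; ring
  have hb'inv : b' * b'⁻¹ = 1 :=
    Matrix.mul_nonsing_inv _ (by simp [hb'det])
  have hb'tri : BlockTriangular b' id := fun i j hij => hdress_tri i j hij
  have hb'invtri : BlockTriangular b'⁻¹ id := by
    have : Invertible b' := b'.invertibleOfIsUnitDet (by simp [hb'det])
    exact blockTriangular_inv_of_blockTriangular hb'tri
  -- formula for ftᴴ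
  have hftH : ftᴴ = b * fᴴ * b'⁻¹ := by
    have h1 : ft * (b * fᴴ * b'⁻¹) = 1 := by
      calc ft * (b * fᴴ * b'⁻¹) = (ft * b * fᴴ) * b'⁻¹ := by
            rw [mul_assoc, mul_assoc, mul_assoc]
      _ = b' * b'⁻¹ := by rw [hb'def]
      _ = 1 := hb'inv
    calc ftᴴ = ftᴴ * (ft * (b * fᴴ * b'⁻¹)) := by rw [h1, mul_one]
    _ = (ftᴴ * ft) * (b * fᴴ * b'⁻¹) := (mul_assoc _ _ _).symm
    _ = b * fᴴ * b'⁻¹ := by rw [hftHft, one_mul]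
  -- lower-left block of ftᴴ vanishes
  have hftH0 : ∀ i j : Fin (2 * n), n ≤ (i : ℕ) → (j : ℕ) < n → ftᴴ i j = 0 := by
    intro i j hi hj
    rw [hftH, Matrix.mul_apply]
    apply Finset.sum_eq_zero
    intro l _
    rcases Classical.em (j < l) with hjl | hjl
    · rw [hb'invtri hjl, mul_zero]
    · have hl : (l : ℕ) < n := lt_of_le_of_lt (by exact_mod_cast not_lt.mp hjl) hj
      have hbf : (b * fᴴ) i l = 0 := by
        rw [Matrix.mul_apply]
        apply Finset.sum_eq_zero
        intro k _
        rcases Classical.em (k < i) with hki | hki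
        · rw [hb_tri i k hki, zero_mul]
        · have hk : n ≤ (k : ℕ) := le_trans hi (by exact_mod_cast not_lt.mp hki)
          have : f l k = 0 := hf0 l k (by omega)
          rw [Matrix.conjTranspose_apply, this, star_zero, mul_zero]
      rw [hbf, zero_mul]
  -- upper-right block of ft vanishes
  have hft_ur : ∀ i j : Fin (2 * n), (i : ℕ) < n → n ≤ (j : ℕ) → ft i j = 0 := by
    intro i j hi hj
    have h := hftH0 j i hj hi
    rw [Matrix.conjTranspose_apply] at h
    exact star_eq_zero.mp h
  -- norms of entries
  set g : Fin (2 * n) → Fin (2 * n) → ℝ := fun i k => Complex.normSq (ft i k) with hg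
  have hgnn : ∀ i k, 0 ≤ g i k := fun i k => Complex.normSq_nonneg _
  have hrow : ∀ i, ∑ k, g i k = 1 := by
    intro i
    have h : (ft * ftᴴ) i i = 1 := by rw [hftftH]; simp [Matrix.one_apply]
    rw [Matrix.mul_apply] at h
    have h2 : ∑ k, ((g i k : ℝ) : ℂ) = 1 := by
      rw [← h]
      apply Finset.sum_congr rfl
      intro k _
      rw [Matrix.conjTranspose_apply, hg]
      simp only [Complex.star_def]
      exact (Complex.mul_conj (ft i k)).symm
    exact_mod_cast h2
  have hcol : ∀ j, ∑ k, g k j = 1 := by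
    intro j
    have h : (ftᴴ * ft) j j = 1 := by rw [hftHft]; simp [Matrix.one_apply]
    rw [Matrix.mul_apply] at h
    have h2 : ∑ k, ((g k j : ℝ) : ℂ) = 1 := by
      rw [← h]
      apply Finset.sum_congr rfl
      intro k _
      rw [Matrix.conjTranspose_apply, hg]
      simp only [Complex.star_def]
      rw [mul_comm]
      exact (Complex.mul_conj (ft k j)).symm
    exact_mod_cast h2
  -- the counting argument
  set U : Finset (Fin (2 * n)) :=
    Finset.univ.filter (fun i : Fin (2 * n) => (i : ℕ) < n) with hU
  set V : Finset (Fin (2 * n)) :=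
    Finset.univ.filter (fun i : Fin (2 * n) => ¬ (i : ℕ) < n) with hV
  have hsplit : ∀ (h : Fin (2 * n) → ℝ),
      ∑ k ∈ U, h k + ∑ k ∈ V, h k = ∑ k, h k := by
    intro h
    rw [hU, hV]
    exact Finset.sum_filter_add_sum_filter_not _ _ _
  -- rows indexed by U concentrate on U
  have hrowU : ∀ i ∈ U, ∑ k ∈ U, g i k = 1 := by
    intro i hi
    have hiU : (i : ℕ) < n := by
      rw [hU] at hi; exact (Finset.mem_filter.mp hi).2
    have hzero : ∑ k ∈ V, g i k = 0 := by
      apply Finset.sum_eq_zero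
      intro k hk
      have hkV : ¬ (k : ℕ) < n := by
        rw [hV] at hk; exact (Finset.mem_filter.mp hk).2
      rw [hg]
      simp only
      rw [hft_ur i k hiU (not_lt.mp hkV), Complex.normSq_zero]
    have := hsplit (g i)
    rw [hzero, hrow i, add_zero] at this
    exact this
  -- double sums
  have hA : ∑ j ∈ U, ∑ i ∈ U, g i j = (U.card : ℝ) := by
    rw [Finset.sum_comm]
    rw [Finset.sum_congr rfl hrowU]
    simp
  have hB : ∑ j ∈ U, (∑ i ∈ U, g i j + ∑ i ∈ V, g i j) = (U.card : ℝ) := by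
    have : ∀ j ∈ U, (∑ i ∈ U, g i j + ∑ i ∈ V, g i j) = 1 := by
      intro j _
      rw [hsplit (fun i => g i j)]
      exact hcol j
    rw [Finset.sum_congr rfl this]
    simp
  have hC : ∑ j ∈ U, ∑ i ∈ V, g i j = 0 := by
    have := hB
    rw [Finset.sum_add_distrib, hA] at this
    linarith
  -- lower-left block of ft vanishes
  have hft_ll : ∀ i j : Fin (2 * n), n ≤ (i : ℕ) → (j : ℕ) < n → ft i j = 0 := by
    intro i j hi hj
    have hjU : j ∈ U := by rw [hU]; simp [hj]
    have hiV : i ∈ V := by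
      rw [hV]; simp only [Finset.mem_filter, Finset.mem_univ, true_and]
      exact not_lt.mpr hi
    have h1 : ∀ j' ∈ U, 0 ≤ ∑ i' ∈ V, g i' j' := fun j' _ =>
      Finset.sum_nonneg (fun i' _ => hgnn i' j')
    have h2 : ∑ i' ∈ V, g i' j = 0 :=
      (Finset.sum_eq_zero_iff_of_nonneg h1).mp hC j hjU
    have h3 : g i j = 0 :=
      (Finset.sum_eq_zero_iff_of_nonneg (fun i' _ => hgnn i' j)).mp h2 i hiV
    exact Complex.normSq_eq_zero.mp h3
  -- ft commutes with I
  have hIft : I * ft = ft * I := by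
    rw [hI]
    ext i j
    rw [Matrix.diagonal_mul, Matrix.mul_diagonal]
    rcases Classical.em ((i : ℕ) < n) with hi | hi <;>
      rcases Classical.em ((j : ℕ) < n) with hj | hj
    · rw [if_pos hi, if_pos hj]; ring
    · rw [hft_ur i j hi (not_lt.mp hj)]; ring
    · rw [hft_ll i j (not_lt.mp hi) hj]; ring
    · rw [if_neg hi, if_neg hj]; ring
  calc ftᴴ * I * ft = ftᴴ * (I * ft) := by rw [mul_assoc]
  _ = ftᴴ * (ft * I) := by rw [hIft]
  _ = (ftᴴ * ft) * I := by rw [mul_assoc]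
  _ = I := by rw [hftHft, one_mul]
end

section
/- Let I = diag(1_n,−1_n) and let X be a 2n×2n complex matrix satisfying X† = −I·X·I. Then the component of X in the Lie algebra of upper triangular matrices, given by the splitting sl(2n,ℂ) = su(2n) ⊕ b, equals (1/2)(id+I)·X·(id−I). -/
open Matrix

/-- For `X` with `Xᴴ = -I X I`, the `b`-component of `X` in the splitting
`sl(2n,ℂ) = su(2n) ⊕ b` equals `(1/2)(id + I) X (id - I)`: that matrix lies in
`b` (upper triangular with real diagonal), and the complementary part
`X - (1/2)(id+I)X(id-I)` is anti-Hermitian (lies in `su(2n)`). -/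
theorem b_component_of_quasi_antihermitian (n : ℕ)
    (I : Matrix (Fin (2 * n)) (Fin (2 * n)) ℂ)
    (hI : I = Matrix.diagonal (fun i : Fin (2 * n) => if (i : ℕ) < n then (1 : ℂ) else -1))
    (X : Matrix (Fin (2 * n)) (Fin (2 * n)) ℂ)
    (hX : Xᴴ = -(I * X * I)) :
    (∀ i j : Fin (2 * n), j < i → ((1 / 2 : ℂ) • ((1 + I) * X * (1 - I))) i j = 0) ∧
    (∀ i : Fin (2 * n), (((1 / 2 : ℂ) • ((1 + I) * X * (1 - I))) i i).im = 0) ∧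
    (X - (1 / 2 : ℂ) • ((1 + I) * X * (1 - I)))ᴴ
      = -(X - (1 / 2 : ℂ) • ((1 + I) * X * (1 - I))) := by
  set d : Fin (2 * n) → ℂ := fun i => if (i : ℕ) < n then (1 : ℂ) else -1 with hd
  have hId : I = Matrix.diagonal d := hI
  have h1 : (1 + I) = Matrix.diagonal (fun i => 1 + d i) := by
    rw [hId, ← Matrix.diagonal_one, ← Matrix.diagonal_add]
  have h2 : (1 - I) = Matrix.diagonal (fun i => 1 - d i) := by
    rw [hId, ← Matrix.diagonal_one, ← Matrix.diagonal_sub]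
  have hent : ∀ i j, ((1 + I) * X * (1 - I)) i j = (1 + d i) * X i j * (1 - d j) := by
    intro i j
    rw [h1, h2]
    simp [Matrix.mul_diagonal, Matrix.diagonal_mul, mul_comm, mul_assoc, mul_left_comm]
  have hXe : ∀ i j, (starRingEnd ℂ) (X j i) = -(d i * X i j * d j) := by
    intro i j
    have := congrFun (congrFun hX i) j
    simpa [hId, Matrix.conjTranspose_apply, Matrix.mul_diagonal, Matrix.diagonal_mul,
      mul_assoc] using this
  refine ⟨?_, ?_, ?_⟩
  · intro i j hji
    simp only [Matrix.smul_apply, hent, smul_eq_mul]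
    by_cases hi : (i : ℕ) < n
    · have hj : (j : ℕ) < n := lt_trans (by exact_mod_cast hji) hi
      simp [hd, hi, hj]
    · simp [hd, hi]
  · intro i
    simp only [Matrix.smul_apply, hent, smul_eq_mul]
    by_cases hi : (i : ℕ) < n <;> simp [hd, hi]
  · ext i j
    simp only [Matrix.conjTranspose_apply, Matrix.sub_apply, Matrix.neg_apply,
      Matrix.smul_apply, hent, smul_eq_mul]
    have hsd : ∀ k, (starRingEnd ℂ) (d k) = d k := by
      intro k; by_cases hk : (k : ℕ) < n <;> simp [hd, hk]
    simp only [Complex.star_def, map_sub, map_add, _root_.map_mul, _root_.map_one, map_div₀,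
      map_ofNat, hsd, hXe i j]
    by_cases hi : (i : ℕ) < n <;> by_cases hj : (j : ℕ) < n <;> simp [hd, hi, hj] <;> ring
end

section
/- Let x₁,…,x_{2n} be distinct real numbers with x_a x_b ≠ 1 for all a,b, and let C be the 2n×2n matrix with entries C_{ab} = 1/(x_a x_b − 1). Define A(z) = ∏_{a=1}^{2n}(z − x_a). Then C is invertible and its inverse has entries (C⁻¹)_{ab} = (x_a x_b)^{2n}/(x_a x_b − 1) · A(x_a⁻¹)A(x_b⁻¹)/(A′(x_a)A′(x_b)). -/
open Matrix Finset Polynomial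

lemma key_sum {N : ℕ} (x : Fin N → ℝ) (hinj : Function.Injective x)
    (f : Polynomial ℝ) (hf : f.natDegree < N) (y : ℝ) (hy : ∀ k, y ≠ x k) :
    ∑ c, f.eval (x c) / ((x c - y) * ∏ k ∈ univ.erase c, (x c - x k))
      = -(f.eval y) / ∏ k, (y - x k) := by
  have hvs : Set.InjOn x (univ : Finset (Fin N)) := hinj.injOn
  have hdeg : f.degree < (#(univ : Finset (Fin N)) : WithBot ℕ) := by
    refine lt_of_le_of_lt degree_le_natDegree ?_
    simp only [card_univ, Fintype.card_fin]
    exact_mod_cast hf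
  have hint := Lagrange.eq_interpolate hvs hdeg
  have hy' : ∀ i ∈ (univ : Finset (Fin N)), y ≠ x i := fun i _ => hy i
  have h1 : f.eval y = (∏ k, (y - x k)) *
      ∑ i, Lagrange.nodalWeight univ x i * (y - x i)⁻¹ * f.eval (x i) := by
    conv_lhs => rw [hint]
    rw [Lagrange.eval_interpolate_not_at_node _ hy', Lagrange.eval_nodal]
  have hQ : (∏ k, (y - x k)) ≠ 0 :=
    prod_ne_zero_iff.mpr fun k _ => sub_ne_zero.mpr (hy k)
  have h2 : ∀ c : Fin N, f.eval (x c) / ((x c - y) * ∏ k ∈ univ.erase c, (x c - x k))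
      = -(Lagrange.nodalWeight univ x c * (y - x c)⁻¹ * f.eval (x c)) := by
    intro c
    have hP : (∏ k ∈ univ.erase c, (x c - x k)) ≠ 0 :=
      prod_ne_zero_iff.mpr fun k hk =>
        sub_ne_zero.mpr (fun h => (mem_erase.mp hk).1 (hinj h.symm))
    have hyc : y - x c ≠ 0 := sub_ne_zero.mpr (hy c)
    rw [Lagrange.nodalWeight, prod_inv_distrib,
      show x c - y = -(y - x c) by ring, div_eq_mul_inv, mul_inv, inv_neg]
    ring
  rw [Finset.sum_congr rfl fun c _ => h2 c, Finset.sum_neg_distrib]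
  rw [h1]
  field_simp

lemma deriv_prod_eq {N : ℕ} (x : Fin N → ℝ) (c : Fin N) :
    deriv (fun z => ∏ a, (z - x a)) (x c) = ∏ k ∈ univ.erase c, (x c - x k) := by
  have h : (fun z : ℝ => ∏ a, (z - x a))
      = fun z => (Lagrange.nodal univ x).eval z := by
    funext z; rw [Lagrange.eval_nodal]
  rw [h, Polynomial.deriv,
    Lagrange.eval_nodal_derivative_eval_node_eq (Finset.mem_univ c),
    Lagrange.eval_nodal]

set_option maxHeartbeats 1000000 in
/-- Explicit inverse of the Cauchy-like matrix `C_{ab} = 1/(x_a x_b - 1)`. -/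
theorem cauchy_like_inverse (n : ℕ) (x : Fin (2 * n) → ℝ)
    (hx0 : ∀ a, x a ≠ 0)
    (hxne : ∀ a b, a ≠ b → x a ≠ x b)
    (hxx : ∀ a b, x a * x b ≠ 1)
    (C D : Matrix (Fin (2 * n)) (Fin (2 * n)) ℝ)
    (hC : ∀ a b, C a b = 1 / (x a * x b - 1))
    (A : ℝ → ℝ) (hA : A = fun z => ∏ a, (z - x a))
    (hD : ∀ a b, D a b = (x a * x b) ^ (2 * n) / (x a * x b - 1) *
      (A (x a)⁻¹ * A (x b)⁻¹ / (deriv A (x a) * deriv A (x b)))) :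
    C * D = 1 ∧ D * C = 1 := by
  have hinj : Function.Injective x := fun a b hab => by
    by_contra h; exact hxne a b h hab
  have hP : ∀ c : Fin (2*n), (∏ k ∈ univ.erase c, (x c - x k)) ≠ 0 := fun c =>
    prod_ne_zero_iff.mpr fun k hk =>
      sub_ne_zero.mpr (hxne c k (Ne.symm (mem_erase.mp hk).1))
  have hBne : ∀ c, (∏ k, (x k * x c - 1)) ≠ 0 := fun c =>
    prod_ne_zero_iff.mpr fun k _ => sub_ne_zero.mpr (hxx k c)
  have hderiv : ∀ c, deriv A (x c) = ∏ k ∈ univ.erase c, (x c - x k) := fun c => by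
    rw [hA]; exact deriv_prod_eq x c
  have hAinv : ∀ c, A (x c)⁻¹ = (∏ k, (x k * x c - 1)) / (x c) ^ (2 * n) := by
    intro c
    rw [hA, eq_div_iff (pow_ne_zero _ (hx0 c))]
    show (∏ a, ((x c)⁻¹ - x a)) * (x c) ^ (2 * n) = _
    have h1 : ((x c : ℝ)) ^ (2 * n) = ∏ _k : Fin (2 * n), x c := by
      rw [prod_const, card_univ, Fintype.card_fin]
    rw [h1, ← prod_mul_distrib]
    calc ∏ k, (((x c)⁻¹ - x k) * x c)
        = ∏ k, ((-1) * (x k * x c - 1)) := by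
          refine prod_congr rfl fun k _ => ?_
          rw [sub_mul, inv_mul_cancel₀ (hx0 c)]; ring
      _ = (-1 : ℝ) ^ (2 * n) * ∏ k, (x k * x c - 1) := by
          rw [prod_mul_distrib, prod_const, card_univ, Fintype.card_fin]
      _ = ∏ k, (x k * x c - 1) := by
          rw [Even.neg_one_pow ⟨n, by ring⟩, one_mul]
  have hCD : C * D = 1 := by
    ext a b
    rw [Matrix.mul_apply, Matrix.one_apply]
    have hy : ∀ k, (x a)⁻¹ ≠ x k := fun k h =>
      hxx a k (by rw [← h, mul_inv_cancel₀ (hx0 a)])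
    have hpos : 0 < 2 * n := a.pos
    have hQv : (∏ k, ((x a)⁻¹ - x k)) = (∏ k, (x k * x a - 1)) / (x a) ^ (2 * n) := by
      have := hAinv a; rw [hA] at this; exact this
    by_cases hab : a = b
    · subst hab
      rw [if_pos rfl]
      have hcard : #(univ.erase a) = 2 * n - 1 := by
        rw [card_erase_of_mem (mem_univ a), card_univ, Fintype.card_fin]
      set f : Polynomial ℝ := ∏ k ∈ univ.erase a, (Polynomial.C (x k) * X - 1) with hf_def
      have hfev : ∀ t : ℝ, f.eval t = ∏ k ∈ univ.erase a, (x k * t - 1) := fun t => by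
        rw [hf_def, eval_prod]; exact prod_congr rfl fun k _ => by simp
      have hfdeg : f.natDegree < 2 * n := by
        have h1 : f.natDegree ≤ ∑ k ∈ univ.erase a, (Polynomial.C (x k) * X - 1 : ℝ[X]).natDegree :=
          natDegree_prod_le _ _
        have h3 : ∑ k ∈ univ.erase a, (Polynomial.C (x k) * X - 1 : ℝ[X]).natDegree
            ≤ #(univ.erase a) := by
          calc _ ≤ ∑ _k ∈ univ.erase a, 1 := Finset.sum_le_sum fun k _ =>
                le_trans (natDegree_sub_le _ _)
                  (max_le (le_trans (natDegree_C_mul_le _ _) (by simp)) (by simp))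
            _ = #(univ.erase a) := by simp
        omega
      have hks := key_sum x hinj f hfdeg (x a)⁻¹ hy
      have hsplit : ∀ c, (∏ k, (x k * x c - 1))
          = (x a * x c - 1) * ∏ k ∈ univ.erase a, (x k * x c - 1) :=
        fun c => (Finset.mul_prod_erase univ _ (Finset.mem_univ a)).symm
      have hterm : ∀ c, C a c * D c a
          = ((∏ k, (x k * x a - 1)) / (x a * ∏ k ∈ univ.erase a, (x a - x k))) *
            (f.eval (x c) / ((x c - (x a)⁻¹) * ∏ k ∈ univ.erase c, (x c - x k))) := by
        intro c
        rw [hC, hD]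
        simp only [hderiv, hAinv, hfev]
        rw [hsplit c]
        have h1 : x a * x c - 1 ≠ 0 := sub_ne_zero.mpr (hxx a c)
        have hPa := hP a
        have hPc := hP c
        set Pa := ∏ k ∈ univ.erase a, (x a - x k)
        set Pc := ∏ k ∈ univ.erase c, (x c - x k)
        set Ba := ∏ k, (x k * x a - 1)
        set Sc := ∏ k ∈ univ.erase a, (x k * x c - 1)
        rw [show x c * x a - 1 = x a * x c - 1 by ring,
          show x c - (x a)⁻¹ = (x a * x c - 1) / x a by
            rw [sub_div, mul_div_cancel_left₀ _ (hx0 a), one_div],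
          mul_pow]
        set d := x a * x c - 1 with hd_def
        clear_value Pa Pc Ba Sc d
        have hu := hx0 a
        have hv := hx0 c
        field_simp
      have hEv : f.eval (x a)⁻¹ = -(∏ k ∈ univ.erase a, (x a - x k)) / (x a) ^ (2 * n - 1) := by
        rw [hfev, eq_div_iff (pow_ne_zero _ (hx0 a))]
        have h1 : ((x a : ℝ)) ^ (2 * n - 1) = ∏ _k ∈ univ.erase a, x a := by
          rw [prod_const, hcard]
        rw [h1, ← prod_mul_distrib]
        calc ∏ k ∈ univ.erase a, ((x k * (x a)⁻¹ - 1) * x a)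
            = ∏ k ∈ univ.erase a, ((-1) * (x a - x k)) := by
              refine prod_congr rfl fun k _ => ?_
              rw [sub_mul, mul_assoc, inv_mul_cancel₀ (hx0 a)]; ring
          _ = (-1 : ℝ) ^ #(univ.erase a) * ∏ k ∈ univ.erase a, (x a - x k) := by
              rw [prod_mul_distrib, prod_const]
          _ = -(∏ k ∈ univ.erase a, (x a - x k)) := by
              rw [hcard, Odd.neg_one_pow ⟨n - 1, by omega⟩]; ring
      calc ∑ c, C a c * D c a
          = ∑ c, ((∏ k, (x k * x a - 1)) / (x a * ∏ k ∈ univ.erase a, (x a - x k))) *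
              (f.eval (x c) / ((x c - (x a)⁻¹) * ∏ k ∈ univ.erase c, (x c - x k))) :=
            Finset.sum_congr rfl fun c _ => hterm c
        _ = ((∏ k, (x k * x a - 1)) / (x a * ∏ k ∈ univ.erase a, (x a - x k))) *
              ∑ c, (f.eval (x c) / ((x c - (x a)⁻¹) * ∏ k ∈ univ.erase c, (x c - x k))) := by
            rw [mul_sum]
        _ = 1 := by
            rw [hks, hEv, hQv]
            have hpow : (x a) ^ (2 * n) = (x a) ^ (2 * n - 1) * x a := by
              rw [← pow_succ]; congr 1; omega
            rw [hpow]
            have hPa := hP a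
            have hBa := hBne a
            have hxp : (x a : ℝ) ^ (2 * n - 1) ≠ 0 := pow_ne_zero _ (hx0 a)
            set Pa := ∏ k ∈ univ.erase a, (x a - x k)
            set Ba := ∏ k, (x k * x a - 1)
            set q := (x a : ℝ) ^ (2 * n - 1)
            clear_value Pa Ba q
            have hu := hx0 a
            field_simp
    · rw [if_neg hab]
      have h2n : 2 ≤ 2 * n := by
        have h1 := a.isLt; have h2 := b.isLt
        have h3 : a.val ≠ b.val := fun h => hab (Fin.ext h)
        omega
      have hbmem : b ∈ univ.erase a := mem_erase.mpr ⟨Ne.symm hab, mem_univ b⟩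
      have hcard2 : #((univ.erase a).erase b) = 2 * n - 2 := by
        rw [card_erase_of_mem hbmem, card_erase_of_mem (mem_univ a), card_univ,
          Fintype.card_fin]
        omega
      set f : Polynomial ℝ := (X - Polynomial.C (x a)⁻¹) *
          ∏ k ∈ (univ.erase a).erase b, (Polynomial.C (x k) * X - 1) with hf_def
      have hfev : ∀ t : ℝ, f.eval t
          = (t - (x a)⁻¹) * ∏ k ∈ (univ.erase a).erase b, (x k * t - 1) := fun t => by
        rw [hf_def, eval_mul, eval_prod]
        simp only [eval_sub, eval_X, eval_C, eval_mul, eval_one]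
      have hfdeg : f.natDegree < 2 * n := by
        have h1 : f.natDegree ≤ (X - Polynomial.C (x a)⁻¹ : ℝ[X]).natDegree +
            (∏ k ∈ (univ.erase a).erase b, (Polynomial.C (x k) * X - 1 : ℝ[X])).natDegree :=
          natDegree_mul_le
        have h2 : (X - Polynomial.C (x a)⁻¹ : ℝ[X]).natDegree = 1 := natDegree_X_sub_C _
        have h3 : (∏ k ∈ (univ.erase a).erase b, (Polynomial.C (x k) * X - 1 : ℝ[X])).natDegree
            ≤ #((univ.erase a).erase b) := by
          refine le_trans (natDegree_prod_le _ _) ?_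
          calc _ ≤ ∑ _k ∈ (univ.erase a).erase b, 1 := Finset.sum_le_sum fun k _ =>
                le_trans (natDegree_sub_le _ _)
                  (max_le (le_trans (natDegree_C_mul_le _ _) (by simp)) (by simp))
            _ = #((univ.erase a).erase b) := by simp
        omega
      have hks := key_sum x hinj f hfdeg (x a)⁻¹ hy
      have hsplit : ∀ c, (∏ k, (x k * x c - 1))
          = (x a * x c - 1) * ((x b * x c - 1) *
              ∏ k ∈ (univ.erase a).erase b, (x k * x c - 1)) := by
        intro c
        have e1 : ∏ k : Fin (2*n), (x k * x c - 1)
            = (x a * x c - 1) * ∏ k ∈ univ.erase a, (x k * x c - 1) :=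
          (Finset.mul_prod_erase univ (fun k => x k * x c - 1) (mem_univ a)).symm
        have e2 : ∏ k ∈ univ.erase a, (x k * x c - 1)
            = (x b * x c - 1) * ∏ k ∈ (univ.erase a).erase b, (x k * x c - 1) :=
          (Finset.mul_prod_erase _ (fun k => x k * x c - 1) hbmem).symm
        rw [e1, e2]
      have hterm : ∀ c, C a c * D c b
          = ((∏ k, (x k * x b - 1)) / (∏ k ∈ univ.erase b, (x b - x k))) *
            (f.eval (x c) / ((x c - (x a)⁻¹) * ∏ k ∈ univ.erase c, (x c - x k))) := by
        intro c
        rw [hC, hD]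
        simp only [hderiv, hAinv, hfev]
        rw [hsplit c]
        have h1 : x a * x c - 1 ≠ 0 := sub_ne_zero.mpr (hxx a c)
        have h1b : x b * x c - 1 ≠ 0 := sub_ne_zero.mpr (hxx b c)
        have hPb := hP b
        have hPc := hP c
        set Pb := ∏ k ∈ univ.erase b, (x b - x k)
        set Pc := ∏ k ∈ univ.erase c, (x c - x k)
        set Bb := ∏ k, (x k * x b - 1)
        set Sc := ∏ k ∈ (univ.erase a).erase b, (x k * x c - 1)
        rw [show x c * x b - 1 = x b * x c - 1 by ring,
          show x c - (x a)⁻¹ = (x a * x c - 1) / x a by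
            rw [sub_div, mul_div_cancel_left₀ _ (hx0 a), one_div],
          mul_pow]
        set d := x a * x c - 1 with hd_def
        set e := x b * x c - 1 with he_def
        clear_value Pb Pc Bb Sc d e
        have hu := hx0 a
        have hv := hx0 c
        have hw := hx0 b
        field_simp
      calc ∑ c, C a c * D c b
          = ∑ c, ((∏ k, (x k * x b - 1)) / (∏ k ∈ univ.erase b, (x b - x k))) *
              (f.eval (x c) / ((x c - (x a)⁻¹) * ∏ k ∈ univ.erase c, (x c - x k))) :=
            Finset.sum_congr rfl fun c _ => hterm c
        _ = ((∏ k, (x k * x b - 1)) / (∏ k ∈ univ.erase b, (x b - x k))) *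
              ∑ c, (f.eval (x c) / ((x c - (x a)⁻¹) * ∏ k ∈ univ.erase c, (x c - x k))) := by
            rw [mul_sum]
        _ = 0 := by
            rw [hks, hfev]
            simp
  exact ⟨hCD, mul_eq_one_comm.mp hCD⟩
end

section
/- Let 0 < α < 1, y > 0, and let Λ₁ > Λ₂ > … > Λ_{2n} > 0 be distinct positive reals with Λ_{n+i} = Λ_i⁻¹ for i = 1,…,n, each Λ_a ≠ α and Λ_aΛ_b ≠ α² for all a,b. Define W_a = α(Λ_a − y²)·∏_{b≠a} (α⁻¹Λ_aΛ_b − α)/(Λ_a − Λ_b). Then for every a with Λ_a² ≠ α², ∑_{b=1}^{2n} W_b/(Λ_aΛ_b − α²) = (y²Λ_a − α²)/(Λ_a² − α²). -/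
/-!
The polynomial `F x = (x - y²) ∏_{c ≠ a} (α⁻¹ Λ_c x - α)` has degree `2n`, less than `2n + 1`, so
its top divided difference over the `2n + 2` nodes `Λ_1, …, Λ_{2n}, α, -α` vanishes:
`∑_x F x / ∏_{z ≠ x} (x - z) = 0`. Comparing `F (Λ_b)` with `W_b` through
`∏_{c ≠ a} f c · f a = ∏_{c ≠ b} f c · f b` for `f c = α⁻¹ Λ_b Λ_c - α`, the term at `Λ_b` is
`α⁻¹ W_b / (Λ_a Λ_b - α²)`, while the terms at `±α` add up to
`-α⁻¹ (y² Λ_a - α²) / (Λ_a² - α²)`; the parity of `2n` enters at the node `α`.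
-/

open Finset Polynomial

theorem Lagrange.sum_eval_div_prod_erase_sub_eq_zero {K : Type*} [Field K] [DecidableEq K]
    (s : Finset K) {P : K[X]} (hP : P.degree < ↑(#s - 1)) :
    ∑ x ∈ s, P.eval x / ∏ z ∈ s.erase x, (x - z) = 0 := by
  have hPs : P.degree < #s := hP.trans_le (by exact_mod_cast Nat.sub_le _ _)
  simpa [coeff_eq_zero_of_degree_lt hP] using (coeff_eq_sum (v := id) (Set.injOn_id _) hPs).symm

section
variable {K ι : Type*} [Field K]

theorem self_ne_neg_of_ne_zero [NeZero (2 : K)] {α : K} (hα : α ≠ 0) : α ≠ -α := by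
  intro h
  have : (2 : K) * α = 0 := by linear_combination h
  simp [hα, two_ne_zero] at this

theorem ne_and_ne_neg_of_mul_self_ne_sq {x α : K} (h : x * x ≠ α ^ 2) : x ≠ α ∧ x ≠ -α := by
  constructor <;> rintro rfl <;> ring_nf at h <;> simp at h

theorem prod_sub_eq_mul_prod_erase_sub_of_even [Fintype ι] [DecidableEq ι]
    (hι : Even (Fintype.card ι)) (f : ι → K) (x : K) (a : ι) :
    ∏ c, (x - f c) = (f a - x) * ∏ c ∈ univ.erase a, (f c - x) := by
  have hodd : Odd #(univ.erase a) := by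
    rw [card_erase_of_mem (mem_univ a), card_univ]
    exact Nat.Even.sub_odd (Fintype.card_pos_iff.mpr ⟨a⟩) hι odd_one
  rw [← mul_prod_erase univ _ (mem_univ a)]
  simp_rw [← neg_sub (f _) x]
  rw [prod_neg, hodd.neg_one_pow]
  ring

theorem notMem_map_of_forall_mul_ne_sq {α : K} {Λ : ι ↪ K} (hΛΛ : ∀ b c, Λ b * Λ c ≠ α ^ 2)
    (s : Finset ι) : α ∉ s.map Λ ∧ -α ∉ s.map Λ := by
  simp only [mem_map, not_exists, not_and]
  exact ⟨fun c _ => (ne_and_ne_neg_of_mul_self_ne_sq (hΛΛ c c)).1,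
    fun c _ => (ne_and_ne_neg_of_mul_self_ne_sq (hΛΛ c c)).2⟩

theorem notMem_insert_neg_map [DecidableEq K] [NeZero (2 : K)] {α : K} {Λ : ι ↪ K}
    (hα : α ≠ 0) (hΛΛ : ∀ b c, Λ b * Λ c ≠ α ^ 2) (s : Finset ι) :
    α ∉ insert (-α) (s.map Λ) := by
  rw [mem_insert, not_or]
  exact ⟨self_ne_neg_of_ne_zero hα, (notMem_map_of_forall_mul_ne_sq hΛΛ s).1⟩

def constraintNodes [Fintype ι] [DecidableEq K] (α : K) (Λ : ι ↪ K) : Finset K :=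
  insert α (insert (-α) (univ.map Λ))

theorem card_constraintNodes [Fintype ι] [DecidableEq K] [NeZero (2 : K)] {α : K}
    {Λ : ι ↪ K} (hα : α ≠ 0) (hΛΛ : ∀ b c, Λ b * Λ c ≠ α ^ 2) :
    #(constraintNodes α Λ) = Fintype.card ι + 2 := by
  rw [constraintNodes, card_insert_of_notMem (notMem_insert_neg_map hα hΛΛ _),
    card_insert_of_notMem (notMem_map_of_forall_mul_ne_sq hΛΛ _).2, card_map, card_univ]

theorem sum_constraintNodes [Fintype ι] [DecidableEq K] [NeZero (2 : K)] {α : K}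
    {Λ : ι ↪ K} (hα : α ≠ 0) (hΛΛ : ∀ b c, Λ b * Λ c ≠ α ^ 2) (g : K → K) :
    ∑ x ∈ constraintNodes α Λ, g x = g α + (g (-α) + ∑ b, g (Λ b)) := by
  rw [constraintNodes, sum_insert (notMem_insert_neg_map hα hΛΛ _),
    sum_insert (notMem_map_of_forall_mul_ne_sq hΛΛ _).2, sum_map]

noncomputable section Constraint
variable [Fintype ι] [DecidableEq ι]

def wtildeSq (α y : K) (Λ : ι → K) (a : ι) : K :=
  α * (Λ a - y ^ 2) * ∏ b ∈ univ.erase a, (α⁻¹ * Λ a * Λ b - α) / (Λ a - Λ b)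

def constraintPoly (α y : K) (Λ : ι → K) (a : ι) : K[X] :=
  (X - C (y ^ 2)) * ∏ c ∈ univ.erase a, (C α⁻¹ * X * C (Λ c) - C α)

theorem eval_constraintPoly (α y : K) (Λ : ι → K) (a : ι) (x : K) :
    (constraintPoly α y Λ a).eval x = (x - y ^ 2) * ∏ c ∈ univ.erase a, (α⁻¹ * x * Λ c - α) := by
  simp [constraintPoly, eval_prod]

theorem natDegree_constraintPoly_le (α y : K) (Λ : ι → K) (a : ι) :
    (constraintPoly α y Λ a).natDegree ≤ Fintype.card ι := by
  have hfactor : ∀ c, (C α⁻¹ * X * C (Λ c) - C α : K[X]).natDegree ≤ 1 := fun c => by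
    compute_degree
  calc (constraintPoly α y Λ a).natDegree
      ≤ 1 + ∑ c ∈ univ.erase a, (C α⁻¹ * X * C (Λ c) - C α : K[X]).natDegree :=
        natDegree_mul_le.trans (add_le_add (natDegree_X_sub_C_le _) (natDegree_prod_le _ _))
    _ ≤ 1 + #(univ.erase a) * 1 := by
        grw [sum_le_card_nsmul _ _ 1 fun c _ => hfactor c, smul_eq_mul]
    _ = Fintype.card ι := by
        rw [mul_one, card_erase_of_mem (mem_univ a), card_univ]
        have := Fintype.card_pos_iff.mpr ⟨a⟩
        omega

variable [DecidableEq K] [NeZero (2 : K)] {α : K} (y : K) {Λ : ι ↪ K}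

theorem eval_constraintPoly_div_at_node (hα : α ≠ 0) (hΛΛ : ∀ b c, Λ b * Λ c ≠ α ^ 2) (a b : ι) :
    (constraintPoly α y Λ a).eval (Λ b) / ∏ z ∈ (constraintNodes α Λ).erase (Λ b), (Λ b - z)
      = α⁻¹ * (wtildeSq α y Λ b / (Λ a * Λ b - α ^ 2)) := by
  obtain ⟨hbα, hbα'⟩ := ne_and_ne_neg_of_mul_self_ne_sq (hΛΛ b b)
  have herase : (constraintNodes α Λ).erase (Λ b)
      = insert α (insert (-α) ((univ.erase b).map Λ)) := by
    rw [constraintNodes, erase_insert_of_ne (Ne.symm hbα), erase_insert_of_ne (Ne.symm hbα'),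
      map_erase]
  have hswap : (α⁻¹ * Λ b * Λ a - α) * ∏ c ∈ univ.erase a, (α⁻¹ * Λ b * Λ c - α)
      = (α⁻¹ * Λ b * Λ b - α) * ∏ c ∈ univ.erase b, (α⁻¹ * Λ b * Λ c - α) := by
    rw [mul_prod_erase univ (fun c => α⁻¹ * Λ b * Λ c - α) (mem_univ a),
      mul_prod_erase univ (fun c => α⁻¹ * Λ b * Λ c - α) (mem_univ b)]
  have hD : ∏ c ∈ univ.erase b, (Λ b - Λ c) ≠ 0 :=
    prod_ne_zero_iff.mpr fun c hc => sub_ne_zero.mpr (Λ.injective.ne (ne_of_mem_erase hc).symm)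
  have hab : Λ b * Λ a - α ^ 2 ≠ 0 := sub_ne_zero.mpr (mul_comm (Λ a) (Λ b) ▸ hΛΛ a b)
  have h1 : Λ b - α ≠ 0 := sub_ne_zero.mpr hbα
  have h2 : Λ b + α ≠ 0 := by rwa [← sub_neg_eq_add, sub_ne_zero]
  rw [herase, prod_insert (notMem_insert_neg_map hα hΛΛ _),
    prod_insert (notMem_map_of_forall_mul_ne_sq hΛΛ _).2, prod_map, eval_constraintPoly,
    wtildeSq, prod_div_distrib, sub_neg_eq_add]
  generalize ∏ c ∈ univ.erase a, (α⁻¹ * Λ b * Λ c - α) = Pa at hswap ⊢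
  generalize ∏ c ∈ univ.erase b, (α⁻¹ * Λ b * Λ c - α) = Pb at hswap ⊢
  generalize ∏ c ∈ univ.erase b, (Λ b - Λ c) = D at hD ⊢
  field_simp at hswap ⊢
  linear_combination (Λ b - y ^ 2) * hswap

theorem eval_constraintPoly_div_at_alpha (hι : Even (Fintype.card ι)) (hα : α ≠ 0)
    (hΛΛ : ∀ b c, Λ b * Λ c ≠ α ^ 2) (a : ι) :
    (constraintPoly α y Λ a).eval α / ∏ z ∈ (constraintNodes α Λ).erase α, (α - z)
      = (α - y ^ 2) / (2 * α * (Λ a - α)) := by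
  have hP : ∏ c ∈ univ.erase a, (Λ c - α) ≠ 0 := prod_ne_zero_iff.mpr fun c _ =>
    sub_ne_zero.mpr (ne_and_ne_neg_of_mul_self_ne_sq (hΛΛ c c)).1
  rw [constraintNodes, erase_insert (notMem_insert_neg_map hα hΛΛ _),
    prod_insert (notMem_map_of_forall_mul_ne_sq hΛΛ _).2, prod_map,
    prod_sub_eq_mul_prod_erase_sub_of_even hι _ _ a, eval_constraintPoly]
  simp only [inv_mul_cancel₀ hα, one_mul, sub_neg_eq_add]
  rw [← mul_assoc, mul_div_mul_right _ _ hP]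
  ring

theorem eval_constraintPoly_div_at_neg_alpha (hα : α ≠ 0) (hΛΛ : ∀ b c, Λ b * Λ c ≠ α ^ 2) (a : ι) :
    (constraintPoly α y Λ a).eval (-α) / ∏ z ∈ (constraintNodes α Λ).erase (-α), (-α - z)
      = (-α - y ^ 2) / (2 * α * (Λ a + α)) := by
  have hP : ∏ c ∈ univ.erase a, (-α - Λ c) ≠ 0 := prod_ne_zero_iff.mpr fun c _ => by
    rw [sub_ne_zero]; exact (ne_and_ne_neg_of_mul_self_ne_sq (hΛΛ c c)).2.symm
  have hfactor : ∀ c, α⁻¹ * -α * Λ c - α = -α - Λ c := fun c => by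
    rw [mul_neg, inv_mul_cancel₀ hα]; ring
  rw [constraintNodes, erase_insert_of_ne (self_ne_neg_of_ne_zero hα),
    erase_insert (notMem_map_of_forall_mul_ne_sq hΛΛ _).2,
    prod_insert (notMem_map_of_forall_mul_ne_sq hΛΛ _).1, prod_map,
    ← mul_prod_erase univ _ (mem_univ a), eval_constraintPoly]
  simp only [hfactor]
  rw [← mul_assoc, mul_div_mul_right _ _ hP]
  ring

theorem degree_constraintPoly_lt (hα : α ≠ 0) (hΛΛ : ∀ b c, Λ b * Λ c ≠ α ^ 2) (a : ι) :
    (constraintPoly α y Λ a).degree < ↑(#(constraintNodes α Λ) - 1) := by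
  rw [card_constraintNodes hα hΛΛ]
  exact (degree_le_of_natDegree_le (natDegree_constraintPoly_le α y Λ a)).trans_lt
    (by exact_mod_cast (by omega : Fintype.card ι < Fintype.card ι + 2 - 1))

theorem sum_wtildeSq_div_mul_sub_sq (hι : Even (Fintype.card ι)) (hα : α ≠ 0)
    (hΛΛ : ∀ b c, Λ b * Λ c ≠ α ^ 2) (a : ι) :
    ∑ b, wtildeSq α y Λ b / (Λ a * Λ b - α ^ 2) = (y ^ 2 * Λ a - α ^ 2) / (Λ a ^ 2 - α ^ 2) := by
  have key := Lagrange.sum_eval_div_prod_erase_sub_eq_zero _ (degree_constraintPoly_lt y hα hΛΛ a)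
  rw [sum_constraintNodes hα hΛΛ, eval_constraintPoly_div_at_alpha y hι hα hΛΛ,
    eval_constraintPoly_div_at_neg_alpha y hα hΛΛ] at key
  simp only [eval_constraintPoly_div_at_node y hα hΛΛ a, ← mul_sum] at key
  obtain ⟨haα, haα'⟩ := ne_and_ne_neg_of_mul_self_ne_sq (hΛΛ a a)
  have h1 : Λ a - α ≠ 0 := sub_ne_zero.mpr haα
  have h2 : Λ a + α ≠ 0 := by rwa [← sub_neg_eq_add, sub_ne_zero]
  have h3 : Λ a ^ 2 - α ^ 2 ≠ 0 := by rw [sq, sub_ne_zero]; exact hΛΛ a a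
  have h4 : (2 : K) ≠ 0 := two_ne_zero
  generalize ∑ b, wtildeSq α y Λ b / (Λ a * Λ b - α ^ 2) = S at key ⊢
  field_simp at key
  rw [eq_div_iff h3]
  refine mul_left_cancel₀ h4 ?_
  linear_combination key

end Constraint

end

theorem wtilde_solves_constraint_general (n : ℕ) (α y : ℝ)
    (hα : 0 < α)
    (Λ : Fin (2 * n) → ℝ)
    (hord : ∀ a b : Fin (2 * n), a < b → Λ b < Λ a)
    (hΛΛ : ∀ a b, Λ a * Λ b ≠ α ^ 2)
    (W : Fin (2 * n) → ℝ)
    (hW : ∀ a, W a = α * (Λ a - y ^ 2) *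
      ∏ b ∈ univ.erase a, (α⁻¹ * Λ a * Λ b - α) / (Λ a - Λ b))
    (a : Fin (2 * n)) :
    ∑ b, W b / (Λ a * Λ b - α ^ 2)
      = (y ^ 2 * Λ a - α ^ 2) / ((Λ a) ^ 2 - α ^ 2) := by
  obtain rfl : W = wtildeSq α y Λ := funext hW
  exact sum_wtildeSq_div_mul_sub_sq (Λ := ⟨Λ, StrictAnti.injective hord⟩) y (by simp) hα.ne' hΛΛ a

/-- The explicit formula for `|w̃_a|²` solves the linear system arising from
the momentum map constraint. -/
theorem wtilde_solves_constraint (n : ℕ) (α y : ℝ)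
    (hα : 0 < α) (hα1 : α < 1) (hy : 0 < y)
    (Λ : Fin (2 * n) → ℝ)
    (hpos : ∀ a, 0 < Λ a)
    (hord : ∀ a b : Fin (2 * n), a < b → Λ b < Λ a)
    (hinv : ∀ i : Fin (2 * n), ∀ h : (i : ℕ) + n < 2 * n,
      Λ ⟨(i : ℕ) + n, h⟩ = (Λ i)⁻¹)
    (hΛα : ∀ a, Λ a ≠ α)
    (hΛΛ : ∀ a b, Λ a * Λ b ≠ α ^ 2)
    (W : Fin (2 * n) → ℝ)
    (hW : ∀ a, W a = α * (Λ a - y ^ 2) *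
      ∏ b ∈ univ.erase a, (α⁻¹ * Λ a * Λ b - α) / (Λ a - Λ b))
    (a : Fin (2 * n)) (ha : (Λ a) ^ 2 ≠ α ^ 2) :
    ∑ b, W b / (Λ a * Λ b - α ^ 2)
      = (y ^ 2 * Λ a - α ^ 2) / ((Λ a) ^ 2 - α ^ 2) :=
  wtilde_solves_constraint_general n α y hα Λ hord hΛΛ W hW a
end

section
/- Let μ > 0, u, v ∈ ℝ, and suppose λ ∈ ℝⁿ satisfies λ₁ > λ₂ > … > λ_n > max(|v|,|u|) and λ_i − λ_{i+1} > μ for i = 1,…,n−1. Then for every k = 1,…,n the quantity e^{−μ}(e^{2λ_k} − e^{−2u})·(sinh μ / sinh 2λ_k)·∏_{i≠k} [sinh(λ_k+λ_i+μ)sinh(λ_k−λ_i+μ)] / [sinh(λ_k−λ_i)sinh(λ_k+λ_i)] is strictly positive. -/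
open Finset Real

/-- Positivity of `|w̃_k|²` on the domain `D₊^λ`. -/
theorem wtilde_k_sq_pos (n : ℕ) (μ u v : ℝ) (hμ : 0 < μ)
    (lam : Fin n → ℝ)
    (hord : ∀ i j : Fin n, i < j → lam j < lam i)
    (hlow : ∀ i, max |v| |u| < lam i)
    (hgap : ∀ i : Fin n, ∀ h : (i : ℕ) + 1 < n, μ < lam i - lam ⟨(i : ℕ) + 1, h⟩)
    (k : Fin n) :
    0 < Real.exp (-μ) * (Real.exp (2 * lam k) - Real.exp (-2 * u)) *
      (Real.sinh μ / Real.sinh (2 * lam k)) *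
      ∏ i ∈ univ.erase k,
        Real.sinh (lam k + lam i + μ) * Real.sinh (lam k - lam i + μ) /
          (Real.sinh (lam k - lam i) * Real.sinh (lam k + lam i)) := by
  have hpos : ∀ i, 0 < lam i := fun i =>
    lt_of_le_of_lt (le_trans (abs_nonneg v) (le_max_left _ _)) (hlow i)
  have hgap' : ∀ i j : Fin n, i < j → μ < lam i - lam j := by
    intro i j hij
    have h1 : (i : ℕ) + 1 < n := lt_of_le_of_lt hij j.isLt
    have hg := hgap i h1
    have hle : lam j ≤ lam ⟨(i : ℕ) + 1, h1⟩ := by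
      rcases eq_or_lt_of_le (Nat.succ_le_of_lt (show (i:ℕ) < j from hij)) with h | h
      · have : (⟨(i : ℕ) + 1, h1⟩ : Fin n) = j := Fin.ext h
        rw [this]
      · exact le_of_lt (hord ⟨(i : ℕ) + 1, h1⟩ j h)
    linarith
  have hu : -u < lam k :=
    lt_of_le_of_lt (le_trans (neg_le_abs u) (le_max_right _ _)) (hlow k)
  have hB : 0 < Real.exp (2 * lam k) - Real.exp (-2 * u) := by
    have := Real.exp_lt_exp.mpr (show -2 * u < 2 * lam k by linarith)
    linarith
  have hC : 0 < Real.sinh μ / Real.sinh (2 * lam k) :=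
    div_pos (Real.sinh_pos_iff.mpr hμ) (Real.sinh_pos_iff.mpr (by linarith [hpos k]))
  have hProd : 0 < ∏ i ∈ univ.erase k,
      Real.sinh (lam k + lam i + μ) * Real.sinh (lam k - lam i + μ) /
        (Real.sinh (lam k - lam i) * Real.sinh (lam k + lam i)) := by
    apply Finset.prod_pos
    intro i hi
    have hik : i ≠ k := Finset.ne_of_mem_erase hi
    have hsum : 0 < Real.sinh (lam k + lam i) :=
      Real.sinh_pos_iff.mpr (by linarith [hpos i, hpos k])
    have hsumμ : 0 < Real.sinh (lam k + lam i + μ) :=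
      Real.sinh_pos_iff.mpr (by linarith [hpos i, hpos k])
    rcases lt_or_gt_of_ne hik with h | h
    · -- i < k : lam i - lam k > μ, so both diffs negative
      have hg := hgap' i k h
      have h1 : Real.sinh (lam k - lam i) < 0 := Real.sinh_neg_iff.mpr (by linarith)
      have h2 : Real.sinh (lam k - lam i + μ) < 0 := Real.sinh_neg_iff.mpr (by linarith)
      exact div_pos_of_neg_of_neg (mul_neg_of_pos_of_neg hsumμ h2)
        (mul_neg_of_neg_of_pos h1 hsum)
    · have hg := hgap' k i h
      have h1 : 0 < Real.sinh (lam k - lam i) := Real.sinh_pos_iff.mpr (by linarith)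
      have h2 : 0 < Real.sinh (lam k - lam i + μ) := Real.sinh_pos_iff.mpr (by linarith)
      exact div_pos (mul_pos hsumμ h2) (mul_pos h1 hsum)
  have hA : 0 < Real.exp (-μ) := Real.exp_pos _
  exact mul_pos (mul_pos (mul_pos hA hB) hC) hProd
end

section
/- Let μ > 0, u, v ∈ ℝ, and suppose λ ∈ ℝⁿ satisfies λ₁ > λ₂ > … > λ_n > max(|v|,|u|) and λ_i − λ_{i+1} > μ for i = 1,…,n−1. Then for every k = 1,…,n the quantity e^{−μ}(e^{−2u} − e^{−2λ_k})·(sinh μ / sinh 2λ_k)·∏_{i≠k} [sinh(λ_k+λ_i−μ)sinh(λ_k−λ_i−μ)] / [sinh(λ_k−λ_i)sinh(λ_k+λ_i)] is strictly positive. -/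
open Finset Real

/-- Positivity of `|w̃_{n+k}|²` on the domain `D₊^λ`. -/
theorem wtilde_nk_sq_pos (n : ℕ) (μ u v : ℝ) (hμ : 0 < μ)
    (lam : Fin n → ℝ)
    (hord : ∀ i j : Fin n, i < j → lam j < lam i)
    (hlow : ∀ i, max |v| |u| < lam i)
    (hgap : ∀ i : Fin n, ∀ h : (i : ℕ) + 1 < n, μ < lam i - lam ⟨(i : ℕ) + 1, h⟩)
    (k : Fin n) :
    0 < Real.exp (-μ) * (Real.exp (-2 * u) - Real.exp (-2 * lam k)) *
      (Real.sinh μ / Real.sinh (2 * lam k)) *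
      ∏ i ∈ univ.erase k,
        Real.sinh (lam k + lam i - μ) * Real.sinh (lam k - lam i - μ) /
          (Real.sinh (lam k - lam i) * Real.sinh (lam k + lam i)) := by
  have hpos : ∀ i, 0 < lam i := fun i =>
    lt_of_le_of_lt (le_max_of_le_left (abs_nonneg v)) (hlow i)
  have hgap' : ∀ d : ℕ, ∀ i j : Fin n, (j : ℕ) = (i : ℕ) + d + 1 → μ < lam i - lam j := by
    intro d
    induction d with
    | zero =>
      intro i j hj
      have h1 : (i : ℕ) + 1 < n := hj ▸ j.isLt
      have := hgap i h1
      have hje : j = ⟨(i : ℕ) + 1, h1⟩ := Fin.ext hj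
      rw [hje]; exact this
    | succ d ih =>
      intro i j hj
      have hj' : (i : ℕ) + d + 1 < n := by omega
      have h1 := ih i ⟨(i : ℕ) + d + 1, hj'⟩ rfl
      have h2 : lam j < lam ⟨(i : ℕ) + d + 1, hj'⟩ := by
        apply hord
        simp only [Fin.lt_def]
        omega
      linarith
  have hgapij : ∀ i j : Fin n, i < j → μ < lam i - lam j := by
    intro i j hij
    have : (j : ℕ) = (i : ℕ) + ((j : ℕ) - (i : ℕ) - 1) + 1 := by
      have := (Fin.lt_def.mp hij); omega
    exact hgap' _ i j this
  have hprod : 0 < ∏ i ∈ univ.erase k,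
      Real.sinh (lam k + lam i - μ) * Real.sinh (lam k - lam i - μ) /
        (Real.sinh (lam k - lam i) * Real.sinh (lam k + lam i)) := by
    apply Finset.prod_pos
    intro i hi
    have hik : i ≠ k := (Finset.mem_erase.mp hi).1
    have hsum : μ < lam k + lam i := by
      rcases lt_or_gt_of_ne hik with h | h
      · have := hgapij i k h; have := hpos k; linarith
      · have := hgapij k i h; have := hpos i; linarith
    have hsum1 : 0 < Real.sinh (lam k + lam i - μ) := sinh_pos_iff.mpr (by linarith)
    have hsum2 : 0 < Real.sinh (lam k + lam i) := sinh_pos_iff.mpr (by linarith [hμ])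
    rcases lt_or_gt_of_ne hik with h | h
    · -- i < k : lam k < lam i, differences negative
      have hd := hgapij i k h
      have h1 : Real.sinh (lam k - lam i - μ) < 0 := sinh_neg_iff.mpr (by linarith)
      have h2 : Real.sinh (lam k - lam i) < 0 := sinh_neg_iff.mpr (by linarith)
      exact div_pos_of_neg_of_neg (mul_neg_of_pos_of_neg hsum1 h1)
        (mul_neg_of_neg_of_pos h2 hsum2)
    · -- k < i : lam k - lam i > μ
      have hd := hgapij k i h
      have h1 : 0 < Real.sinh (lam k - lam i - μ) := sinh_pos_iff.mpr (by linarith)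
      have h2 : 0 < Real.sinh (lam k - lam i) := sinh_pos_iff.mpr (by linarith)
      exact div_pos (mul_pos hsum1 h1) (mul_pos h2 hsum2)
  have hu : u < lam k := lt_of_le_of_lt (le_trans (le_abs_self u) (le_max_right _ _)) (hlow k)
  have hexp : 0 < Real.exp (-2 * u) - Real.exp (-2 * lam k) := by
    have : Real.exp (-2 * lam k) < Real.exp (-2 * u) := Real.exp_lt_exp.mpr (by linarith)
    linarith
  have hsμ : 0 < Real.sinh μ := sinh_pos_iff.mpr hμ
  have hsk : 0 < Real.sinh (2 * lam k) := sinh_pos_iff.mpr (by linarith [hpos k])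
  exact mul_pos (mul_pos (mul_pos (Real.exp_pos _) hexp) (div_pos hsμ hsk)) hprod
end

section
/- Fix real u, v and μ > 0, and fix (λ,θ) ∈ ℝⁿ × ℝⁿ with λ in the interior domain λ₁ > … > λ_n > max(|v|,|u|), λ_i − λ_{i+1} > μ. Define for r > 0 the function H_r(λ,θ) = V(rλ; ru, rv, rμ) + e^{r(v−u)} ∑_k [cos θ_k / cosh²(rλ_k)]·√(1 − sinh²(rv)/sinh²(rλ_k))·√(1 − sinh²(ru)/sinh²(rλ_k))·∏_{l≠k} √(1 − sinh²(rμ)/sinh²(r(λ_k−λ_l)))·√(1 − sinh²(rμ)/sinh²(r(λ_k+λ_l))), where V(λ;u,v,μ) = e^{v−u}[ (sinh v sinh u / sinh²μ)∏_k(1 − sinh²μ/sinh²λ_k) − (cosh v cosh u / sinh²μ)∏_k(1 + sinh²μ/cosh²λ_k) + n e^{u−v} + cosh(v−u)/sinh²μ ]. Then lim_{r→0⁺} H_r(λ,θ) = (uv/μ²)[∏_k(1 − μ²/λ_k²) − 1] + ∑_k cos θ_k · √(1 − v²/λ_k²)·√(1 − u²/λ_k²)·∏_{l≠k} √(1 −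 μ²/(λ_k−λ_l)²)·√(1 − μ²/(λ_k+λ_l)²). -/
/-!
Every ratio `sinh (r a) / sinh (r b)` tends to `a / b` as `r → 0`, which gives the kinetic term
termwise. The potential is singular like `1 / sinh² (rμ)`: writing
`cosh (r(v - u)) = cosh rv cosh ru - sinh rv sinh ru` regroups it into
`sinh rv sinh ru / sinh² rμ · (∏ - 1)`, which has the rational limit, and
`cosh rv cosh ru · (∏ (1 + sinh² rμ / cosh² rλ_k) - 1) / sinh² rμ → n`, which cancels against
the constant `n e^{r(u - v)}`.
-/

open Finset Real
open Filter Topology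

theorem HasDerivAt.tendsto_div_of_apply_eq_zero {𝕜 : Type*} [NontriviallyNormedField 𝕜]
    {f g : 𝕜 → 𝕜} {a b x : 𝕜} (hf : HasDerivAt f a x) (hg : HasDerivAt g b x)
    (hfx : f x = 0) (hgx : g x = 0) (hb : b ≠ 0) :
    Tendsto (fun t => f t / g t) (𝓝[≠] x) (𝓝 (a / b)) := by
  refine (hf.tendsto_slope.div hg.tendsto_slope hb).congr' ?_
  filter_upwards [self_mem_nhdsWithin] with t ht
  rw [Pi.div_apply, slope_def_field, slope_def_field, hfx, hgx, sub_zero, sub_zero,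
    div_div_div_cancel_right₀ (sub_ne_zero.2 ht)]

lemma hasDerivAt_sinh_mul_zero (a : ℝ) : HasDerivAt (fun r => sinh (r * a)) a 0 := by
  simpa using ((hasDerivAt_id (0 : ℝ)).mul_const a).sinh

lemma tendsto_sinh_mul_div_sinh_mul (a : ℝ) {b : ℝ} (hb : b ≠ 0) :
    Tendsto (fun r => sinh (r * a) / sinh (r * b)) (𝓝[≠] 0) (𝓝 (a / b)) :=
  (hasDerivAt_sinh_mul_zero a).tendsto_div_of_apply_eq_zero (hasDerivAt_sinh_mul_zero b)
    (by simp) (by simp) hb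

lemma tendsto_sqrt_one_sub_sinh_sq_div_sinh_sq (a : ℝ) {b : ℝ} (hb : b ≠ 0) :
    Tendsto (fun r => √(1 - sinh (r * a) ^ 2 / sinh (r * b) ^ 2)) (𝓝[≠] 0)
      (𝓝 √(1 - a ^ 2 / b ^ 2)) := by
  simp_rw [← div_pow]
  exact (tendsto_const_nhds.sub ((tendsto_sinh_mul_div_sinh_mul a hb).pow 2)).sqrt

lemma tendsto_prod_one_add_mul_sub_one_div {α ι 𝕜 : Type*} [Field 𝕜] [TopologicalSpace 𝕜]
    [IsTopologicalRing 𝕜] {l : Filter α} (s : Finset ι) {t : α → 𝕜} {d : ι → α → 𝕜}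
    {e : ι → 𝕜} (ht : Tendsto t l (𝓝 0)) (ht0 : ∀ᶠ r in l, t r ≠ 0)
    (hd : ∀ k ∈ s, Tendsto (d k) l (𝓝 (e k))) :
    Tendsto (fun r => (∏ k ∈ s, (1 + t r * d k r) - 1) / t r) l (𝓝 (∑ k ∈ s, e k)) := by
  classical
  induction s using Finset.cons_induction with
  | empty => simpa using tendsto_const_nhds
  | cons a s ha ih =>
    simp only [Finset.forall_mem_cons] at hd
    have hprod_sinh : Tendsto (fun r => ∏ k ∈ s, (1 + t r * d k r)) l (𝓝 1) := by
      simpa using tendsto_finsetProd s fun k hk =>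
        (tendsto_const_nhds (x := (1 : 𝕜))).add (ht.mul (hd.2 k hk))
    rw [Finset.sum_cons, add_comm, ← mul_one (e a)]
    refine (ih hd.2).add (hd.1.mul hprod_sinh) |>.congr' ?_
    filter_upwards [ht0] with r hr
    rw [Finset.prod_cons]
    field_simp
    ring

lemma tendsto_comp_mul_nhdsNE_zero {f : ℝ → ℝ} (hf : Continuous f) (a : ℝ) :
    Tendsto (fun r => f (r * a)) (𝓝[≠] 0) (𝓝 (f 0)) :=
  ((hf.comp (continuous_mul_const a)).tendsto' 0 (f 0) (by simp)).mono_left nhdsWithin_le_nhds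

/-- `e^{-r(v-u)} V(rλ; ru, rv, rμ)`. -/
noncomputable def scaledPotential (n : ℕ) (lam : Fin n → ℝ) (u v μ r : ℝ) : ℝ :=
  sinh (r * v) * sinh (r * u) / sinh (r * μ) ^ 2 *
      ∏ k, (1 - sinh (r * μ) ^ 2 / sinh (r * lam k) ^ 2)
    - cosh (r * v) * cosh (r * u) / sinh (r * μ) ^ 2 *
      ∏ k, (1 + sinh (r * μ) ^ 2 / cosh (r * lam k) ^ 2)
    + n * exp (r * (u - v)) + cosh (r * (v - u)) / sinh (r * μ) ^ 2

/-- The sum over `k` in `H_r`, without its prefactor `e^{r(v-u)}`. -/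
noncomputable def scaledKinetic (n : ℕ) (lam θ : Fin n → ℝ) (u v μ r : ℝ) : ℝ :=
  ∑ k, cos (θ k) / cosh (r * lam k) ^ 2 *
    √(1 - sinh (r * v) ^ 2 / sinh (r * lam k) ^ 2) *
    √(1 - sinh (r * u) ^ 2 / sinh (r * lam k) ^ 2) *
    ∏ l ∈ univ.erase k,
      √(1 - sinh (r * μ) ^ 2 / sinh (r * (lam k - lam l)) ^ 2) *
      √(1 - sinh (r * μ) ^ 2 / sinh (r * (lam k + lam l)) ^ 2)

lemma scaledPotential_eq {n : ℕ} (lam : Fin n → ℝ) (u v μ : ℝ) {r : ℝ}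
    (hr : sinh (r * μ) ≠ 0) :
    scaledPotential n lam u v μ r =
      sinh (r * v) * sinh (r * u) / sinh (r * μ) ^ 2 *
          (∏ k, (1 - sinh (r * μ) ^ 2 / sinh (r * lam k) ^ 2) - 1)
        - cosh (r * v) * cosh (r * u) *
          ((∏ k, (1 + sinh (r * μ) ^ 2 / cosh (r * lam k) ^ 2) - 1) / sinh (r * μ) ^ 2)
        + n * exp (r * (u - v)) := by
  rw [scaledPotential, mul_sub r v u, cosh_sub]
  field_simp
  ring

lemma tendsto_scaledPotential {n : ℕ} {lam : Fin n → ℝ} (u v : ℝ) {μ : ℝ} (hμ : μ ≠ 0)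
    (hlam : ∀ k, lam k ≠ 0) :
    Tendsto (scaledPotential n lam u v μ) (𝓝[≠] 0)
      (𝓝 (u * v / μ ^ 2 * (∏ k, (1 - μ ^ 2 / lam k ^ 2) - 1))) := by
  have hsinh : Tendsto (fun r => sinh (r * v) * sinh (r * u) / sinh (r * μ) ^ 2) (𝓝[≠] 0)
      (𝓝 (u * v / μ ^ 2)) := by
    convert (tendsto_sinh_mul_div_sinh_mul v hμ).mul (tendsto_sinh_mul_div_sinh_mul u hμ)
      using 2 <;> ring
  have hprod_sinh : Tendsto (fun r => ∏ k, (1 - sinh (r * μ) ^ 2 / sinh (r * lam k) ^ 2) - 1)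
      (𝓝[≠] 0) (𝓝 (∏ k, (1 - μ ^ 2 / lam k ^ 2) - 1)) := by
    simp_rw [← div_pow]
    exact (tendsto_finsetProd _ fun k _ => tendsto_const_nhds.sub
      ((tendsto_sinh_mul_div_sinh_mul μ (hlam k)).pow 2)).sub_const 1
  have hcosh : Tendsto (fun r => cosh (r * v) * cosh (r * u)) (𝓝[≠] 0) (𝓝 1) := by
    simpa using (tendsto_comp_mul_nhdsNE_zero continuous_cosh v).mul
      (tendsto_comp_mul_nhdsNE_zero continuous_cosh u)
  have hsinh_ne : ∀ᶠ r in 𝓝[≠] 0, sinh (r * μ) ^ 2 ≠ 0 := by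
    filter_upwards [self_mem_nhdsWithin] with r hr
    simpa using And.intro hr hμ
  have hprod_cosh : Tendsto
      (fun r => (∏ k, (1 + sinh (r * μ) ^ 2 / cosh (r * lam k) ^ 2) - 1) / sinh (r * μ) ^ 2)
      (𝓝[≠] 0) (𝓝 (n : ℝ)) := by
    simpa [div_eq_mul_inv] using
      tendsto_prod_one_add_mul_sub_one_div (univ : Finset (Fin n)) (e := fun _ => 1)
      (by simpa using (tendsto_comp_mul_nhdsNE_zero continuous_sinh μ).pow 2) hsinh_ne
      fun k _ => by simpa using ((tendsto_comp_mul_nhdsNE_zero continuous_cosh (lam k)).pow 2).inv₀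
  have hexp : Tendsto (fun r => (n : ℝ) * exp (r * (u - v))) (𝓝[≠] 0) (𝓝 n) := by
    simpa using (tendsto_comp_mul_nhdsNE_zero continuous_exp (u - v)).const_mul (n : ℝ)
  have h := ((hsinh.mul hprod_sinh).sub (hcosh.mul hprod_cosh)).add hexp
  rw [one_mul, sub_add_cancel] at h
  refine h.congr' ?_
  filter_upwards [hsinh_ne] with r hr
  exact (scaledPotential_eq lam u v μ (pow_ne_zero_iff two_ne_zero |>.1 hr)).symm

lemma tendsto_scaledKinetic {n : ℕ} {lam : Fin n → ℝ} (θ : Fin n → ℝ) (u v μ : ℝ)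
    (hlam : ∀ k, lam k ≠ 0) (hinj : Function.Injective lam)
    (hadd : ∀ k l, k ≠ l → lam k + lam l ≠ 0) :
    Tendsto (scaledKinetic n lam θ u v μ) (𝓝[≠] 0)
      (𝓝 (∑ k, cos (θ k) * √(1 - v ^ 2 / lam k ^ 2) * √(1 - u ^ 2 / lam k ^ 2) *
        ∏ l ∈ univ.erase k,
          √(1 - μ ^ 2 / (lam k - lam l) ^ 2) * √(1 - μ ^ 2 / (lam k + lam l) ^ 2))) := by
  refine tendsto_finsetSum _ fun k _ => ?_
  have hcos : Tendsto (fun r => cos (θ k) / cosh (r * lam k) ^ 2) (𝓝[≠] 0) (𝓝 (cos (θ k))) := by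
    simpa [Pi.div_def] using tendsto_const_nhds.div
      ((tendsto_comp_mul_nhdsNE_zero continuous_cosh (lam k)).pow 2) (by simp)
  have hpair : Tendsto (fun r => ∏ l ∈ univ.erase k,
        √(1 - sinh (r * μ) ^ 2 / sinh (r * (lam k - lam l)) ^ 2) *
        √(1 - sinh (r * μ) ^ 2 / sinh (r * (lam k + lam l)) ^ 2)) (𝓝[≠] 0)
      (𝓝 (∏ l ∈ univ.erase k,
        √(1 - μ ^ 2 / (lam k - lam l) ^ 2) * √(1 - μ ^ 2 / (lam k + lam l) ^ 2))) := by
    refine tendsto_finsetProd _ fun l hl => ?_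
    have hkl : k ≠ l := (ne_of_mem_erase hl).symm
    exact (tendsto_sqrt_one_sub_sinh_sq_div_sinh_sq μ (sub_ne_zero.2 (hinj.ne hkl))).mul
      (tendsto_sqrt_one_sub_sinh_sq_div_sinh_sq μ (hadd k l hkl))
  exact ((hcos.mul (tendsto_sqrt_one_sub_sinh_sq_div_sinh_sq v (hlam k))).mul
    (tendsto_sqrt_one_sub_sinh_sq_div_sinh_sq u (hlam k))).mul hpair

theorem cotangent_bundle_limit_general (n : ℕ) (u v μ : ℝ) (hμ : 0 < μ)
    (lam θ : Fin n → ℝ)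
    (hord : ∀ i j : Fin n, i < j → lam j < lam i)
    (hlow : ∀ i, max |v| |u| < lam i)
    (H : ℝ → ℝ)
    (hH : H = fun r =>
      Real.exp (r * (v - u)) *
        (Real.sinh (r * v) * Real.sinh (r * u) / Real.sinh (r * μ) ^ 2 *
            ∏ k, (1 - Real.sinh (r * μ) ^ 2 / Real.sinh (r * lam k) ^ 2)
          - Real.cosh (r * v) * Real.cosh (r * u) / Real.sinh (r * μ) ^ 2 *
            ∏ k, (1 + Real.sinh (r * μ) ^ 2 / Real.cosh (r * lam k) ^ 2)
          + n * Real.exp (r * (u - v)) + Real.cosh (r * (v - u)) / Real.sinh (r * μ) ^ 2)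
      + Real.exp (r * (v - u)) *
          ∑ k, Real.cos (θ k) / Real.cosh (r * lam k) ^ 2 *
            Real.sqrt (1 - Real.sinh (r * v) ^ 2 / Real.sinh (r * lam k) ^ 2) *
            Real.sqrt (1 - Real.sinh (r * u) ^ 2 / Real.sinh (r * lam k) ^ 2) *
            ∏ l ∈ univ.erase k,
              Real.sqrt (1 - Real.sinh (r * μ) ^ 2 /
                  Real.sinh (r * (lam k - lam l)) ^ 2) *
              Real.sqrt (1 - Real.sinh (r * μ) ^ 2 /
                  Real.sinh (r * (lam k + lam l)) ^ 2)) :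
    Filter.Tendsto H (nhdsWithin 0 (Set.Ioi 0)) (nhds
      (u * v / μ ^ 2 * (∏ k, (1 - μ ^ 2 / lam k ^ 2) - 1)
        + ∑ k, Real.cos (θ k) *
            Real.sqrt (1 - v ^ 2 / lam k ^ 2) *
            Real.sqrt (1 - u ^ 2 / lam k ^ 2) *
            ∏ l ∈ univ.erase k,
              Real.sqrt (1 - μ ^ 2 / (lam k - lam l) ^ 2) *
              Real.sqrt (1 - μ ^ 2 / (lam k + lam l) ^ 2))) := by
  subst hH
  have hpos : ∀ k, 0 < lam k := fun k =>
    ((abs_nonneg v).trans (le_max_left _ _)).trans_lt (hlow k)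
  have hexp := tendsto_comp_mul_nhdsNE_zero continuous_exp (v - u)
  have h := (hexp.mul (tendsto_scaledPotential u v hμ.ne' fun k => (hpos k).ne')).add
    (hexp.mul (tendsto_scaledKinetic θ u v μ (fun k => (hpos k).ne')
      (show StrictAnti lam from hord).injective fun k l _ => (add_pos (hpos k) (hpos l)).ne'))
  rw [exp_zero, one_mul, one_mul] at h
  exact h.mono_left (nhdsGT_le_nhdsNE 0)

/-- The cotangent-bundle limit `r → 0⁺` of the scaled RSvD Hamiltonian `H_r`
converges to the dual of the rational `BC_n` Sutherland Hamiltonian. -/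
theorem cotangent_bundle_limit (n : ℕ) (u v μ : ℝ) (hμ : 0 < μ)
    (lam θ : Fin n → ℝ)
    (hord : ∀ i j : Fin n, i < j → lam j < lam i)
    (hlow : ∀ i, max |v| |u| < lam i)
    (hgap : ∀ i : Fin n, ∀ h : (i : ℕ) + 1 < n, μ < lam i - lam ⟨(i : ℕ) + 1, h⟩)
    (H : ℝ → ℝ)
    (hH : H = fun r =>
      Real.exp (r * (v - u)) *
        (Real.sinh (r * v) * Real.sinh (r * u) / Real.sinh (r * μ) ^ 2 *
            ∏ k, (1 - Real.sinh (r * μ) ^ 2 / Real.sinh (r * lam k) ^ 2)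
          - Real.cosh (r * v) * Real.cosh (r * u) / Real.sinh (r * μ) ^ 2 *
            ∏ k, (1 + Real.sinh (r * μ) ^ 2 / Real.cosh (r * lam k) ^ 2)
          + n * Real.exp (r * (u - v)) + Real.cosh (r * (v - u)) / Real.sinh (r * μ) ^ 2)
      + Real.exp (r * (v - u)) *
          ∑ k, Real.cos (θ k) / Real.cosh (r * lam k) ^ 2 *
            Real.sqrt (1 - Real.sinh (r * v) ^ 2 / Real.sinh (r * lam k) ^ 2) *
            Real.sqrt (1 - Real.sinh (r * u) ^ 2 / Real.sinh (r * lam k) ^ 2) *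
            ∏ l ∈ univ.erase k,
              Real.sqrt (1 - Real.sinh (r * μ) ^ 2 /
                  Real.sinh (r * (lam k - lam l)) ^ 2) *
              Real.sqrt (1 - Real.sinh (r * μ) ^ 2 /
                  Real.sinh (r * (lam k + lam l)) ^ 2)) :
    Filter.Tendsto H (nhdsWithin 0 (Set.Ioi 0)) (nhds
      (u * v / μ ^ 2 * (∏ k, (1 - μ ^ 2 / lam k ^ 2) - 1)
        + ∑ k, Real.cos (θ k) *
            Real.sqrt (1 - v ^ 2 / lam k ^ 2) *
            Real.sqrt (1 - u ^ 2 / lam k ^ 2) *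
            ∏ l ∈ univ.erase k,
              Real.sqrt (1 - μ ^ 2 / (lam k - lam l) ^ 2) *
              Real.sqrt (1 - μ ^ 2 / (lam k + lam l) ^ 2))) :=
  cotangent_bundle_limit_general n u v μ hμ lam θ hord hlow H hH
end

section
/- Let x, y, α > 0, let Ω be a 2n×2n positive-definite Hermitian matrix, L a 2n×2n matrix with L† = I L I where I = diag(1_n,−1_n), and w ∈ ℂ^{2n}. Suppose 2y²Ω − Ω² + Ω L I Ω = α²·id + α²·L·I + 2ww† and Ω = ρ Λ ρ with ρ² = id, ρ† = ρ real, and Λ = diag(Λ₁,…,Λ_{2n}) with all Λ_aΛ_b ≠ α². Set Q = ρ L I ρ and w̃ = ρw. Then Q_{ab} = (Λ_aΛ_b − α²)⁻¹[(Λ_a² − 2y²Λ_a + α²)δ_{ab} + 2 w̃_a (w̃_b)*] for all a, b. -/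
open Matrix
open scoped ComplexOrder

/-- Solving the conjugated constraint equation for the entries of `Q = ρ L I ρ`. -/
theorem Q_entries_from_constraint (n : ℕ) (x y α : ℝ)
    (hx : 0 < x) (hy : 0 < y) (hα : 0 < α)
    (I : Matrix (Fin (2 * n)) (Fin (2 * n)) ℂ)
    (hI : I = Matrix.diagonal (fun i : Fin (2 * n) => if (i : ℕ) < n then (1 : ℂ) else -1))
    (Ω L ρ : Matrix (Fin (2 * n)) (Fin (2 * n)) ℂ)
    (w : Fin (2 * n) → ℂ)
    (hΩ : Ω.PosDef)
    (hL : Lᴴ = I * L * I)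
    (hconstraint : (2 * y ^ 2 : ℂ) • Ω - Ω * Ω + Ω * L * I * Ω
      = (α ^ 2 : ℂ) • 1 + (α ^ 2 : ℂ) • (L * I)
        + (2 : ℂ) • Matrix.vecMulVec w (star w))
    (Λ : Fin (2 * n) → ℝ)
    (hρ2 : ρ * ρ = 1) (hρH : ρᴴ = ρ) (hρT : ρᵀ = ρ)
    (hdiag : Ω = ρ * Matrix.diagonal (fun a => (Λ a : ℂ)) * ρ)
    (hΛΛ : ∀ a b, Λ a * Λ b ≠ α ^ 2)
    (Q : Matrix (Fin (2 * n)) (Fin (2 * n)) ℂ) (hQ : Q = ρ * L * I * ρ)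
    (wt : Fin (2 * n) → ℂ) (hwt : wt = ρ *ᵥ w) :
    ∀ a b, Q a b = ((Λ a : ℂ) * (Λ b : ℂ) - (α ^ 2 : ℂ))⁻¹ *
      (((Λ a : ℂ) ^ 2 - 2 * (y ^ 2 : ℂ) * (Λ a : ℂ) + (α ^ 2 : ℂ)) *
          (if a = b then 1 else 0)
        + 2 * wt a * star (wt b)) := by
  set D : Matrix (Fin (2 * n)) (Fin (2 * n)) ℂ :=
    Matrix.diagonal (fun a => (Λ a : ℂ)) with hD
  -- ρ is entrywise real : star (ρ i j) = ρ j i and ρ j i = ρ i j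
  have hρstar : ∀ i j, star (ρ i j) = ρ i j := by
    intro i j
    have h1 : ρᴴ j i = ρ j i := by rw [hρH]
    have h2 : ρᵀ j i = ρ j i := by rw [hρT]
    simp [Matrix.conjTranspose_apply] at h1
    simp [Matrix.transpose_apply] at h2
    rw [← h2] at h1; exact h1
  have hsym : ∀ i j, ρ i j = ρ j i := by
    intro i j
    have h2 : ρᵀ j i = ρ j i := by rw [hρT]
    simpa [Matrix.transpose_apply] using h2
  have e1 : ρ * Ω = D * ρ := by
    rw [hdiag, ← Matrix.mul_assoc, ← Matrix.mul_assoc, hρ2, Matrix.one_mul]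
  have e1' : Ω * ρ = ρ * D := by
    rw [hdiag, Matrix.mul_assoc, hρ2, Matrix.mul_one]
  have e2 : ρ * (Ω * Ω) * ρ = D * D := by
    rw [← Matrix.mul_assoc, e1, Matrix.mul_assoc, Matrix.mul_assoc, e1',
      ← Matrix.mul_assoc ρ ρ D, hρ2, Matrix.one_mul]
  have e4 : ρ * (L * I) * ρ = Q := by
    rw [hQ]; simp only [Matrix.mul_assoc]
  have e3 : ρ * (Ω * L * I * Ω) * ρ = D * Q * D := by
    have : Ω * L * I * Ω = Ω * (L * I) * Ω := by
      rw [Matrix.mul_assoc Ω L I]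
    rw [this]
    calc ρ * (Ω * (L * I) * Ω) * ρ
        = (ρ * Ω) * (L * I) * (Ω * ρ) := by
          simp only [Matrix.mul_assoc]
      _ = D * (ρ * (L * I) * ρ) * D := by
          rw [e1, e1']; simp only [Matrix.mul_assoc]
      _ = D * Q * D := by rw [e4]
  have e5 : ρ * Matrix.vecMulVec w (star w) * ρ = Matrix.vecMulVec wt (star wt) := by
    ext a b
    simp only [Matrix.mul_apply, Matrix.vecMulVec_apply, hwt, Matrix.mulVec,
      dotProduct, Pi.star_apply, star_sum, star_mul']
    rw [Finset.sum_mul_sum, Finset.sum_comm]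
    simp only [Finset.sum_mul]
    refine Finset.sum_congr rfl fun j _ => Finset.sum_congr rfl fun i _ => ?_
    rw [hρstar b j, hsym b j]
    ring
  -- conjugate the constraint
  have hmain : (2 * y ^ 2 : ℂ) • D - D * D + D * Q * D
      = (α ^ 2 : ℂ) • (1 : Matrix (Fin (2*n)) (Fin (2*n)) ℂ) + (α ^ 2 : ℂ) • Q
        + (2 : ℂ) • Matrix.vecMulVec wt (star wt) := by
    have h := congrArg (fun M => ρ * M * ρ) hconstraint
    simp only [Matrix.mul_sub, Matrix.sub_mul, Matrix.mul_add, Matrix.add_mul,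
      Matrix.mul_smul, Matrix.smul_mul] at h
    rw [e1] at h
    rw [Matrix.mul_assoc D ρ ρ, hρ2, Matrix.mul_one] at h
    rw [Matrix.mul_one ρ, hρ2] at h
    rw [e2, e3, e4, e5] at h
    exact h
  intro a b
  have hne : ((Λ a : ℂ) * (Λ b : ℂ) - (α ^ 2 : ℂ)) ≠ 0 := by
    rw [sub_ne_zero]
    intro hc
    apply hΛΛ a b
    exact_mod_cast hc
  have h' := congrFun (congrFun hmain a) b
  have hDQ : (D * Q * D) a b = (Λ a : ℂ) * Q a b * (Λ b : ℂ) := by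
    rw [hD, Matrix.mul_diagonal, Matrix.diagonal_mul]
  rw [eq_comm, inv_mul_eq_iff_eq_mul₀ hne]
  rcases eq_or_ne a b with rfl | hab
  · have hDD : (D * D) a a = (Λ a : ℂ) ^ 2 := by
      rw [hD, Matrix.diagonal_mul_diagonal]; simp [sq]
    have hDaa : D a a = (Λ a : ℂ) := by simp [hD]
    simp only [Matrix.sub_apply, Matrix.add_apply, Matrix.smul_apply, smul_eq_mul,
      hDQ, hDD, hDaa, Matrix.one_apply_eq, Matrix.vecMulVec_apply, Pi.star_apply] at h'
    rw [if_pos rfl]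
    linear_combination -h'
  · have hDD : (D * D) a b = 0 := by
      rw [hD, Matrix.diagonal_mul_diagonal]; simp [Matrix.diagonal_apply_ne _ hab]
    have hDab : D a b = 0 := by simp [hD, Matrix.diagonal_apply_ne _ hab]
    have h1 : (1 : Matrix (Fin (2*n)) (Fin (2*n)) ℂ) a b = 0 := Matrix.one_apply_ne hab
    simp only [Matrix.sub_apply, Matrix.add_apply, Matrix.smul_apply, smul_eq_mul,
      hDQ, hDD, hDab, h1, Matrix.vecMulVec_apply, Pi.star_apply] at h'
    rw [if_neg hab]
    linear_combination -h'
end
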